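/- arXiv:1304.5578 — 3 statements merged into one kernel-verified Lean document; each statement's English description precedes it below -/
import Mathlib

section
/- Let F be the self-adjoint Jacobi operator on ℓ²(ℕ) with zero diagonal and off-diagonal entries γ_n = √((2n+2)(2n+3)) − √((2n+1)(2n+2)). Then F is bounded with operator norm ‖F‖ ≤ 2(1 + 1/1600000000). -/
/-!
For positive weights `a n`, AM-GM gives `|2 γₙ vₙ vₙ₊₁| ≤ aₙ vₙ² + (γₙ² / aₙ) vₙ₊₁²`; summing and
shifting the second sum bounds the form by `C ∑ vₙ²` as soon as `a₀ ≤ C` and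
`aₙ₊₁ + γₙ² / aₙ ≤ C` for all `n`. With `p = 2n + 2` one has `γₙ² ≤ p² / (p² - 1)`, and the weights
`aₙ = (2n + 2) / (2n + 1)` turn the second condition, for this upper bound of `γₙ²`, into the
identity `aₙ₊₁ + (p² / (p² - 1)) / aₙ = 2`. So the constant `2` already works.
-/

noncomputable def gam (n : ℕ) : ℝ :=
  Real.sqrt ((2 * n + 2) * (2 * n + 3)) - Real.sqrt ((2 * n + 1) * (2 * n + 2))

lemma abs_two_mul_mul_mul_le {a : ℝ} (ha : 0 < a) (g x y : ℝ) :
    |2 * g * x * y| ≤ a * x ^ 2 + g ^ 2 / a * y ^ 2 := by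
  have hsub : a * x ^ 2 + g ^ 2 / a * y ^ 2 - 2 * g * x * y = (a * x - g * y) ^ 2 / a := by
    field_simp; ring
  have hadd : a * x ^ 2 + g ^ 2 / a * y ^ 2 + 2 * g * x * y = (a * x + g * y) ^ 2 / a := by
    field_simp; ring
  rw [abs_le]
  constructor <;> linarith [div_nonneg (sq_nonneg (a * x - g * y)) ha.le,
    div_nonneg (sq_nonneg (a * x + g * y)) ha.le]

section JacobiForm

variable {γ a : ℕ → ℝ} {C : ℝ}

lemma le_of_jacobi_weights (ha : ∀ n, 0 < a n) (h0 : a 0 ≤ C)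
    (hstep : ∀ n, a (n + 1) + γ n ^ 2 / a n ≤ C) (n : ℕ) : a n ≤ C := by
  cases n with
  | zero => exact h0
  | succ n => linarith [hstep n, div_nonneg (sq_nonneg (γ n)) (ha n).le]

lemma sq_div_le_of_jacobi_weights (ha : ∀ n, 0 < a n)
    (hstep : ∀ n, a (n + 1) + γ n ^ 2 / a n ≤ C) (n : ℕ) : γ n ^ 2 / a n ≤ C := by
  linarith [hstep n, ha (n + 1)]

theorem abs_tsum_jacobi_form_le (ha : ∀ n, 0 < a n) (h0 : a 0 ≤ C)
    (hstep : ∀ n, a (n + 1) + γ n ^ 2 / a n ≤ C) {v : ℕ → ℝ} (hv : Summable fun n => v n ^ 2) :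
    |∑' n, 2 * γ n * v n * v (n + 1)| ≤ C * ∑' n, v n ^ 2 := by
  have hv' : Summable fun n => v (n + 1) ^ 2 := (summable_nat_add_iff 1).mpr hv
  have hav : Summable fun n => a n * v n ^ 2 :=
    .of_nonneg_of_le (fun n => mul_nonneg (ha n).le (sq_nonneg _))
      (fun n => mul_le_mul_of_nonneg_right (le_of_jacobi_weights ha h0 hstep n) (sq_nonneg _))
      (hv.mul_left C)
  have hbv : Summable fun n => γ n ^ 2 / a n * v (n + 1) ^ 2 :=
    .of_nonneg_of_le (fun n => mul_nonneg (div_nonneg (sq_nonneg _) (ha n).le) (sq_nonneg _))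
      (fun n => mul_le_mul_of_nonneg_right (sq_div_le_of_jacobi_weights ha hstep n) (sq_nonneg _))
      (hv'.mul_left C)
  have hshift : Summable fun n => (a (n + 1) + γ n ^ 2 / a n) * v (n + 1) ^ 2 := by
    simpa only [add_mul] using ((summable_nat_add_iff 1).mpr hav).add hbv
  calc |∑' n, 2 * γ n * v n * v (n + 1)|
      ≤ ∑' n, (a n * v n ^ 2 + γ n ^ 2 / a n * v (n + 1) ^ 2) :=
        tsum_of_norm_bounded (f := fun n => 2 * γ n * v n * v (n + 1)) (hav.add hbv).hasSum
          fun n => abs_two_mul_mul_mul_le (ha n) _ _ _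
    _ = a 0 * v 0 ^ 2 + ∑' n, (a (n + 1) + γ n ^ 2 / a n) * v (n + 1) ^ 2 := by
        simp only [add_mul]
        rw [hav.tsum_add hbv, hav.tsum_eq_zero_add, add_assoc,
          ((summable_nat_add_iff 1).mpr hav).tsum_add hbv]
    _ ≤ C * v 0 ^ 2 + ∑' n, C * v (n + 1) ^ 2 := by
        have hCv := hv'.mul_left C
        gcongr
        exact hstep _
    _ = C * ∑' n, v n ^ 2 := by rw [tsum_mul_left, hv.tsum_eq_zero_add, mul_add]

end JacobiForm

lemma sq_sqrt_mul_add_one_sub_sqrt_sub_one_mul_le {p : ℝ} (hp : 1 < p) :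
    (√(p * (p + 1)) - √((p - 1) * p)) ^ 2 ≤ p ^ 2 / (p ^ 2 - 1) := by
  set s := √(p ^ 2 - 1)
  have hs0 : 0 ≤ s := Real.sqrt_nonneg _
  have hs2 : s ^ 2 = p ^ 2 - 1 := Real.sq_sqrt (by nlinarith)
  have hexp : (√(p * (p + 1)) - √((p - 1) * p)) ^ 2 = 2 * p ^ 2 - 2 * p * s := by
    rw [sub_sq, Real.sq_sqrt (by nlinarith), Real.sq_sqrt (by nlinarith), mul_assoc,
      ← Real.sqrt_mul (by nlinarith), show p * (p + 1) * ((p - 1) * p) = p ^ 2 * (p ^ 2 - 1) by ring,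
      Real.sqrt_mul (by positivity), Real.sqrt_sq (by linarith)]
    ring
  have hkey : p ^ 2 - 2 ≤ p * s := by
    nlinarith [sq_nonneg (p ^ 2 - 2 - p * s), mul_nonneg (by linarith : (0:ℝ) ≤ p) hs0]
  rw [hexp, le_div_iff₀ (by nlinarith), ← hs2]
  nlinarith [mul_nonneg (by linarith : (0:ℝ) ≤ p) hs0]

noncomputable def jacobiWeight (n : ℕ) : ℝ := (2 * n + 2) / (2 * n + 1)

lemma jacobiWeight_pos (n : ℕ) : 0 < jacobiWeight n := by
  unfold jacobiWeight; positivity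

lemma gam_sq_le (n : ℕ) : gam n ^ 2 ≤ (2 * n + 2) ^ 2 / ((2 * n + 1) * (2 * n + 3)) := by
  have h := sq_sqrt_mul_add_one_sub_sqrt_sub_one_mul_le (p := 2 * n + 2)
    (by linarith [n.cast_nonneg (α := ℝ)])
  rwa [show (2 * n + 2 : ℝ) * (2 * n + 2 + 1) = (2 * n + 2) * (2 * n + 3) by ring,
    show (2 * n + 2 - 1 : ℝ) * (2 * n + 2) = (2 * n + 1) * (2 * n + 2) by ring,
    show (2 * n + 2 : ℝ) ^ 2 - 1 = (2 * n + 1) * (2 * n + 3) by ring] at h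

lemma jacobiWeight_succ_add_gam_sq_div_le (n : ℕ) :
    jacobiWeight (n + 1) + gam n ^ 2 / jacobiWeight n ≤ 2 := by
  calc jacobiWeight (n + 1) + gam n ^ 2 / jacobiWeight n
      ≤ jacobiWeight (n + 1) + (2 * n + 2) ^ 2 / ((2 * n + 1) * (2 * n + 3)) / jacobiWeight n := by
        gcongr
        · exact (jacobiWeight_pos n).le
        · exact gam_sq_le n
    _ = 2 := by
        unfold jacobiWeight
        push_cast
        field_simp
        ring

/-- The self-adjoint Jacobi operator `F` with zero diagonal and off-diagonal entries
`γ_n` is bounded with operator norm at most `2(1 + 1/1600000000)`: its quadratic form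
`⟨v, F v⟩ = ∑_n 2 γ_n v_n v_{n+1}` satisfies the corresponding bound on all of `ℓ²`. -/
theorem jacobi_offdiag_norm_bound (v : ℕ → ℝ) (hv : Summable fun n => (v n) ^ 2) :
    |∑' n, 2 * gam n * v n * v (n + 1)| ≤
      2 * (1 + 1 / 1600000000) * ∑' n, (v n) ^ 2 := by
  calc |∑' n, 2 * gam n * v n * v (n + 1)| ≤ 2 * ∑' n, v n ^ 2 :=
        abs_tsum_jacobi_form_le jacobiWeight_pos (by norm_num [jacobiWeight])
          jacobiWeight_succ_add_gam_sq_div_le hv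
    _ ≤ 2 * (1 + 1 / 1600000000) * ∑' n, v n ^ 2 := by
        gcongr
        norm_num
end

section
/- Let α, β > 0 with √(αβ) > 1 + 1/1600000000. Let D be the self-adjoint Jacobi operator on ℓ²(ℕ) with diagonal d_n = α for even n, d_n = β for odd n, and off-diagonal entries −γ_n/2, where γ_n = √((2n+2)(2n+3)) − √((2n+1)(2n+2)). Then D ≥ Δ(α,β)·I in the quadratic form sense, where Δ(α,β) = 2·min{√(α/β), √(β/α)}·(√(αβ) − 1 − 1/1600000000) > 0. -/
/-- The Jacobi operator with diagonal `d` and off-diagonal entries `-γ_n/2`. -/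
noncomputable def jacobiD (d : ℕ → ℝ) (u : ℕ → ℝ) : ℕ → ℝ
  | 0 => d 0 * u 0 - gam 0 / 2 * u 1
  | (m + 1) => d (m + 1) * u (m + 1) - gam m / 2 * u m - gam (m + 1) / 2 * u (m + 2)

open Real

lemma mul_mul_le_weighted_sq_add_sq {b q : ℝ} (hb : 0 ≤ b) (hq : 0 < q) (x y : ℝ) :
    b * (x * y) ≤ b * q / 2 * x ^ 2 + b / (2 * q) * y ^ 2 := by
  have h : b * q / 2 * x ^ 2 + b / (2 * q) * y ^ 2 - b * (x * y) =
      b / (2 * q) * (q * x - y) ^ 2 := by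
    field_simp
    ring
  rw [← sub_nonneg, h]
  positivity

theorem summable_and_tsum_mul_mul_succ_le {b q c v : ℕ → ℝ} (hb : ∀ n, 0 ≤ b n)
    (hq : ∀ n, 0 < q n) (hc₀ : b 0 * q 0 / 2 ≤ c 0)
    (hc : ∀ n, b (n + 1) * q (n + 1) / 2 + b n / (2 * q n) ≤ c (n + 1))
    (hcv : Summable fun n => c n * v n ^ 2) :
    Summable (fun n => b n * (v n * v (n + 1))) ∧
      ∑' n, b n * (v n * v (n + 1)) ≤ ∑' n, c n * v n ^ 2 := by
  set X : ℕ → ℝ := fun n => b n * q n / 2 * v n ^ 2 with hX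
  set Y : ℕ → ℝ := fun n => b n / (2 * q n) * v (n + 1) ^ 2 with hY
  have hX_coef : ∀ n, 0 ≤ b n * q n / 2 := fun n => by have := hq n; have := hb n; positivity
  have hY_coef : ∀ n, 0 ≤ b n / (2 * q n) := fun n => by have := hq n; have := hb n; positivity
  have hcX : ∀ n, b n * q n / 2 ≤ c n := by
    rintro (_ | n)
    · exact hc₀
    · linarith [hc n, hY_coef n]
  have hcY : ∀ n, b n / (2 * q n) ≤ c (n + 1) := fun n => by linarith [hc n, hX_coef (n + 1)]
  have hXc : ∀ n, X n ≤ c n * v n ^ 2 := fun n =>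
    mul_le_mul_of_nonneg_right (hcX n) (sq_nonneg _)
  have hYc : ∀ n, Y n ≤ c (n + 1) * v (n + 1) ^ 2 := fun n =>
    mul_le_mul_of_nonneg_right (hcY n) (sq_nonneg _)
  have hXs : Summable X :=
    .of_nonneg_of_le (fun n => mul_nonneg (hX_coef n) (sq_nonneg _)) hXc hcv
  have hYs : Summable Y :=
    .of_nonneg_of_le (fun n => mul_nonneg (hY_coef n) (sq_nonneg _)) hYc
      ((summable_nat_add_iff 1).mpr hcv)
  have hedge : ∀ n, ‖b n * (v n * v (n + 1))‖ ≤ X n + Y n := fun n => by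
    rw [Real.norm_eq_abs, abs_mul, abs_of_nonneg (hb n), abs_mul]
    simpa only [hX, hY, sq_abs] using mul_mul_le_weighted_sq_add_sq (hb n) (hq n) |v n| |v (n + 1)|
  have hs : Summable fun n => b n * (v n * v (n + 1)) := .of_norm_bounded (hXs.add hYs) hedge
  refine ⟨hs, ?_⟩
  have hXs' : Summable fun n => X (n + 1) := (summable_nat_add_iff 1).mpr hXs
  calc ∑' n, b n * (v n * v (n + 1)) ≤ ∑' n, (X n + Y n) :=
        hs.tsum_le_tsum (fun n => (le_abs_self _).trans (hedge n)) (hXs.add hYs)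
    _ = X 0 + ∑' n, (X (n + 1) + Y n) := by
        rw [hXs.tsum_add hYs, hXs.tsum_eq_zero_add, hXs'.tsum_add hYs, add_assoc]
    _ ≤ c 0 * v 0 ^ 2 + ∑' n, c (n + 1) * v (n + 1) ^ 2 := by
        refine add_le_add (hXc 0) ((hXs'.add hYs).tsum_le_tsum (fun n => ?_)
          ((summable_nat_add_iff 1).mpr hcv))
        simpa only [hX, hY, add_mul] using
          mul_le_mul_of_nonneg_right (hc n) (sq_nonneg (v (n + 1)))
    _ = ∑' n, c n * v n ^ 2 := hcv.tsum_eq_zero_add.symm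

lemma two_mul_sqrt_mul_sqrt_le {x : ℝ} (hx : 0 ≤ x) :
    2 * (√x * √(x + 2)) ≤ √(x + 1) * (√x + √(x + 2)) := by
  have ha := sq_sqrt hx
  have hb := sq_sqrt (by linarith : 0 ≤ x + 2)
  have hm := sq_sqrt (by linarith : 0 ≤ x + 1)
  have hP : √x * √(x + 2) ≤ x + 1 := by nlinarith [sq_nonneg (√x - √(x + 2))]
  have hP₀ : 0 ≤ √x * √(x + 2) := by positivity
  rw [← pow_le_pow_iff_left₀ (by positivity) (by positivity) two_ne_zero]
  nlinarith [mul_le_mul hP hP hP₀ (by linarith), mul_le_mul_of_nonneg_left hP hP₀]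

lemma gam_mul_sqrt_add_sqrt (n : ℕ) :
    gam n * (√(2 * n + 1) + √(2 * n + 3)) = 2 * √(2 * n + 2) := by
  have h₁ := sq_sqrt (by positivity : (0 : ℝ) ≤ 2 * n + 1)
  have h₃ := sq_sqrt (by positivity : (0 : ℝ) ≤ 2 * n + 3)
  rw [gam, sqrt_mul (by positivity), sqrt_mul (by positivity)]
  linear_combination √(2 * n + 2) * (h₃ - h₁)

lemma gam_pos (n : ℕ) : 0 < gam n := by
  have h : 0 < gam n * (√(2 * n + 1) + √(2 * n + 3)) := by
    rw [gam_mul_sqrt_add_sqrt]; positivity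
  exact pos_of_mul_pos_left h (by positivity)

lemma gam_mul_sqrt_mul_sqrt_le (n : ℕ) :
    gam n * (√(2 * n + 1) * √(2 * n + 3)) ≤ 2 * n + 2 := by
  have h := two_mul_sqrt_mul_sqrt_le (by positivity : (0 : ℝ) ≤ 2 * n + 1)
  rw [show (2 * n + 1 + 2 : ℝ) = 2 * n + 3 by ring,
    show (2 * n + 1 + 1 : ℝ) = 2 * n + 2 by ring] at h
  have h₂ := sq_sqrt (by positivity : (0 : ℝ) ≤ 2 * n + 2)
  refine le_of_mul_le_mul_right ?_ (by positivity : 0 < √(2 * n + 1) + √(2 * n + 3))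
  calc gam n * (√(2 * n + 1) * √(2 * n + 3)) * (√(2 * n + 1) + √(2 * n + 3))
      = √(2 * n + 2) * (2 * (√(2 * n + 1) * √(2 * n + 3))) := by
        rw [mul_right_comm, gam_mul_sqrt_add_sqrt]; ring
    _ ≤ √(2 * n + 2) * (√(2 * n + 2) * (√(2 * n + 1) + √(2 * n + 3))) := by gcongr
    _ = (2 * n + 2) * (√(2 * n + 1) + √(2 * n + 3)) := by rw [← mul_assoc, ← sq, h₂]

/-- Since `γ₀ = √6 - √2 > 1`, the weights `eₙ` alone would not do; the extra factor
`√((2n+3)/(2n+1))` absorbs the excess of `γₙ` over `1`. -/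
theorem summable_and_tsum_gam_mul_le {e v : ℕ → ℝ} (he : ∀ n, 0 < e n)
    (he₁ : ∀ n, e n * e (n + 1) = 1) (hv : Summable fun n => e n * v n ^ 2) :
    Summable (fun n => gam n * (v n * v (n + 1))) ∧
      ∑' n, gam n * (v n * v (n + 1)) ≤ ∑' n, e n * v n ^ 2 := by
  refine summable_and_tsum_mul_mul_succ_le (q := fun n => √(2 * n + 3) / √(2 * n + 1) * e n)
    (fun n => (gam_pos n).le) (fun n => by have := he n; positivity) ?_ (fun n => ?_) hv
  · have h := gam_mul_sqrt_mul_sqrt_le 0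
    norm_num at h ⊢
    nlinarith [he 0]
  · have h₁ := gam_mul_sqrt_mul_sqrt_le n
    have h₂ := gam_mul_sqrt_mul_sqrt_le (n + 1)
    have h₃ := sq_sqrt (by positivity : (0 : ℝ) ≤ 2 * n + 3)
    have hen : e n = (e (n + 1))⁻¹ := eq_inv_of_mul_eq_one_left (he₁ n)
    push_cast at h₂ ⊢
    rw [show (2 * (n + 1) + 1 : ℝ) = 2 * n + 3 by ring,
      show (2 * (n + 1) + 3 : ℝ) = 2 * n + 5 by ring] at h₂ ⊢
    have hid : gam (n + 1) * (√(2 * n + 5) / √(2 * n + 3) * e (n + 1)) / 2 +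
        gam n / (2 * (√(2 * n + 3) / √(2 * n + 1) * e n)) =
        e (n + 1) / (2 * √(2 * n + 3) ^ 2) *
          (gam (n + 1) * (√(2 * n + 3) * √(2 * n + 5)) +
            gam n * (√(2 * n + 1) * √(2 * n + 3))) := by
      rw [hen]
      field_simp
    rw [hid, h₃]
    calc _ ≤ e (n + 1) / (2 * (2 * n + 3)) * ((2 * n + 4) + (2 * n + 2)) := by
          gcongr
          · have := he (n + 1); positivity
          · linarith
      _ = e (n + 1) := by field_simp; ring

theorem tsum_mul_jacobiD {d v : ℕ → ℝ} (hd : Summable fun n => d n * v n ^ 2)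
    (hg : Summable fun n => gam n * (v n * v (n + 1))) :
    ∑' n, v n * jacobiD d v n = ∑' n, d n * v n ^ 2 - ∑' n, gam n * (v n * v (n + 1)) := by
  set p : ℕ → ℝ := fun n => gam n * (v n * v (n + 1)) with hp
  have hsucc := ((hasSum_nat_add_iff' 1).mpr hd.hasSum).sub
    ((hg.hasSum.div_const 2).add (((hasSum_nat_add_iff' 1).mpr hg.hasSum).div_const 2))
  refine ((hasSum_nat_add_iff' 1).mp ?_).tsum_eq
  convert hsucc using 1
  · funext n
    simp only [jacobiD, hp]
    ring
  · simp only [Finset.range_one, Finset.sum_singleton, jacobiD, hp]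
    ring

theorem tsum_sub_div_mul_le_tsum_mul_jacobiD {d v : ℕ → ℝ} {s : ℝ} (hs : 0 < s)
    (hd : ∀ n, 0 < d n) (hdd : ∀ n, d n * d (n + 1) = s ^ 2)
    (hv : Summable fun n => d n * v n ^ 2) :
    ∑' n, (d n - d n / s) * v n ^ 2 ≤ ∑' n, v n * jacobiD d v n := by
  have hv' : Summable fun n => d n / s * v n ^ 2 :=
    (hv.div_const s).congr fun n => by ring
  obtain ⟨hg, hle⟩ := summable_and_tsum_gam_mul_le (fun n => div_pos (hd n) hs)
    (fun n => by field_simp; exact hdd n) hv'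
  simp only [sub_mul]
  rw [tsum_mul_jacobiD hv hg, hv.tsum_sub hv']
  linarith

section Alternating

variable {α β : ℝ} {d : ℕ → ℝ}

lemma mul_succ_eq_of_alternating (hd : ∀ n, d n = if Even n then α else β) (n : ℕ) :
    d n * d (n + 1) = α * β := by
  rcases Nat.even_or_odd n with hn | hn
  · rw [hd, hd, if_pos hn, if_neg (Nat.not_even_iff_odd.2 hn.add_one)]
  · rw [hd, hd, if_neg (Nat.not_even_iff_odd.2 hn), if_pos hn.add_one, mul_comm]

lemma div_sqrt_mul_eq_sqrt_div (hα : 0 < α) (hβ : 0 < β) : α / √(α * β) = √(α / β) := by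
  rw [sqrt_div hα.le, sqrt_mul hα.le]
  field_simp
  rw [sq_sqrt hα.le]

lemma min_le_div_sqrt_of_alternating (hα : 0 < α) (hβ : 0 < β)
    (hd : ∀ n, d n = if Even n then α else β) (n : ℕ) :
    min √(α / β) √(β / α) ≤ d n / √(α * β) := by
  rw [hd]
  split_ifs
  · rw [div_sqrt_mul_eq_sqrt_div hα hβ]
    exact min_le_left _ _
  · rw [mul_comm, div_sqrt_mul_eq_sqrt_div hβ hα]
    exact min_le_right _ _

end Alternating

/-- If `√(αβ) > 1 + 1/1600000000`, then the Jacobi operator `D` with alternating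
diagonal `α, β, α, β, …` and off-diagonal entries `-γ_n/2` satisfies
`D ≥ Δ(α,β) · I` in the quadratic form sense, where
`Δ(α,β) = min{√(α/β), √(β/α)} (√(αβ) - 1 - 1/1600000000) > 0`. -/
theorem jacobi_lower_bound (α β : ℝ) (hα : 0 < α) (hβ : 0 < β)
    (hαβ : Real.sqrt (α * β) > 1 + 1 / 1600000000)
    (d : ℕ → ℝ) (hd : ∀ n, d n = if Even n then α else β)
    (Δ : ℝ)
    (hΔ : Δ = min (Real.sqrt (α / β)) (Real.sqrt (β / α)) *
      (Real.sqrt (α * β) - 1 - 1 / 1600000000)) :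
    0 < Δ ∧
    ∀ v : ℕ → ℝ, (Summable fun n => (v n) ^ 2) →
      Δ * ∑' n, (v n) ^ 2 ≤ ∑' n, v n * jacobiD d v n := by
  set s := √(α * β)
  have hs : 0 < s := by linarith
  have hgap : 0 < s - 1 - 1 / 1600000000 := by linarith
  have hd_pos : ∀ n, 0 < d n := fun n => by rw [hd n]; split_ifs <;> assumption
  refine ⟨hΔ ▸ mul_pos (lt_min (sqrt_pos.2 (div_pos hα hβ)) (sqrt_pos.2 (div_pos hβ hα))) hgap,
    fun v hv => ?_⟩
  have hdv : Summable fun n => d n * v n ^ 2 :=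
    (hv.mul_left (max α β)).of_nonneg_of_le (fun n => by have := hd_pos n; positivity)
      (fun n => mul_le_mul_of_nonneg_right (by rw [hd n]; split_ifs <;> simp) (sq_nonneg _))
  have hΔd : ∀ n, Δ ≤ d n - d n / s := fun n => by
    have hdn := div_pos (hd_pos n) hs
    calc Δ ≤ d n / s * (s - 1 - 1 / 1600000000) :=
          hΔ ▸ mul_le_mul_of_nonneg_right (min_le_div_sqrt_of_alternating hα hβ hd n) hgap.le
      _ ≤ d n / s * (s - 1) := mul_le_mul_of_nonneg_left (by linarith) hdn.le
      _ = d n - d n / s := by field_simp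
  calc Δ * ∑' n, v n ^ 2 = ∑' n, Δ * v n ^ 2 := tsum_mul_left.symm
    _ ≤ ∑' n, (d n - d n / s) * v n ^ 2 :=
        (hv.mul_left Δ).tsum_le_tsum (fun n => mul_le_mul_of_nonneg_right (hΔd n) (sq_nonneg _))
          ((hdv.sub (hdv.div_const s)).congr fun n => by ring)
    _ ≤ ∑' n, v n * jacobiD d v n :=
        tsum_sub_div_mul_le_tsum_mul_jacobiD hs hd_pos
          (fun n => by rw [mul_succ_eq_of_alternating hd, sq_sqrt (by positivity)]) hdv
end

section
/- Let H be a Hilbert space and T a bounded self-adjoint positivity-improving operator with respect to a self-dual cone (or a cone given by a fixed orthonormal basis: T improves positivity if ⟨e_m, T e_n⟩ > 0 for all basis vectors and T maps nonzero nonnegative vectors to strictly positive vectors). If ‖T‖ is an eigenvalue of T, then ‖T‖ is a simple eigenvalue and the corresponding eigenvector can be chosen strictly positive. -/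
/-!
Write `|v|` for the vector whose coordinates are the absolute values of those of `v`. Since `T`
preserves positivity, `|(T v)ᵢ| ≤ (T |v|)ᵢ`, so `⟪v, T v⟫ ≤ ⟪|v|, T |v|⟫` while `‖|v|‖ = ‖v‖`.
Hence if `v` is an eigenvector for `‖T‖`, the Rayleigh quotient of `|v|` attains `‖T‖`, which
forces `|v|` to be an eigenvector for `‖T‖` too, and positivity improvement makes it strictly
positive. So no nonzero eigenvector for `‖T‖` has a vanishing coordinate; subtracting from an
eigenvector `ψ` the multiple of the positive one that kills a coordinate therefore leaves `0`.
-/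

open scoped InnerProductSpace ENNReal

noncomputable section

namespace lp

variable {ι : Type*} {p : ℝ≥0∞}

def pointwiseAbs (f : lp (fun _ : ι => ℝ) p) : lp (fun _ : ι => ℝ) p :=
  ⟨fun i => |f i|, (lp.memℓp f).norm⟩

@[simp] lemma pointwiseAbs_apply (f : lp (fun _ : ι => ℝ) p) (i : ι) :
    pointwiseAbs f i = |f i| :=
  rfl

lemma norm_pointwiseAbs (hp : p ≠ 0) (f : lp (fun _ : ι => ℝ) p) : ‖pointwiseAbs f‖ = ‖f‖ :=
  le_antisymm (norm_mono hp fun i => by simp) (norm_mono hp fun i => by simp)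

end lp

theorem ContinuousLinearMap.apply_eq_norm_smul_of_le_inner {E : Type*} [NormedAddCommGroup E]
    [InnerProductSpace ℝ E] (T : E →L[ℝ] E) {ψ : E} (h : ‖T‖ * ‖ψ‖ ^ 2 ≤ ⟪ψ, T ψ⟫_ℝ) :
    T ψ = ‖T‖ • ψ := by
  have hTψ : ‖T ψ‖ ≤ ‖T‖ * ‖ψ‖ := T.le_opNorm ψ
  have hexpand : ‖T ψ - ‖T‖ • ψ‖ ^ 2 = ‖T ψ‖ ^ 2 - 2 * (‖T‖ * ⟪ψ, T ψ⟫_ℝ) + ‖T‖ ^ 2 * ‖ψ‖ ^ 2 := by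
    rw [norm_sub_sq_real, inner_smul_right, real_inner_comm, norm_smul, norm_norm]
    ring
  have hzero : ‖T ψ - ‖T‖ • ψ‖ ^ 2 ≤ 0 := by
    rw [hexpand]
    nlinarith [norm_nonneg T, norm_nonneg ψ, norm_nonneg (T ψ)]
  rw [← sub_eq_zero, ← norm_eq_zero]
  exact pow_eq_zero_iff two_ne_zero |>.1 (le_antisymm hzero (sq_nonneg _))

namespace HilbertBasis

variable {ι H : Type*} [NormedAddCommGroup H] [InnerProductSpace ℝ H] (e : HilbertBasis ι ℝ H)

def absVec (v : H) : H :=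
  e.repr.symm (lp.pointwiseAbs (e.repr v))

@[simp] lemma repr_absVec (v : H) (i : ι) : e.repr (e.absVec v) i = |e.repr v i| := by
  simp [absVec]

lemma norm_absVec (v : H) : ‖e.absVec v‖ = ‖v‖ := by
  rw [absVec, LinearIsometryEquiv.norm_map, lp.norm_pointwiseAbs two_ne_zero,
    LinearIsometryEquiv.norm_map]

lemma absVec_eq_zero_iff {v : H} : e.absVec v = 0 ↔ v = 0 := by
  rw [← norm_eq_zero, norm_absVec, norm_eq_zero]

lemma summable_repr_mul_repr (v w : H) : Summable fun i => e.repr v i * e.repr w i := by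
  simpa only [HilbertBasis.repr_apply_apply, real_inner_comm (e _) v] using
    e.summable_inner_mul_inner v w

lemma inner_eq_tsum_repr_mul_repr (v w : H) : ⟪v, w⟫_ℝ = ∑' i, e.repr v i * e.repr w i := by
  simpa only [HilbertBasis.repr_apply_apply, real_inner_comm (e _) v] using
    (e.tsum_inner_mul_inner v w).symm

def IsPositivityPreserving (T : H →L[ℝ] H) : Prop :=
  ∀ v, (∀ i, 0 ≤ e.repr v i) → ∀ i, 0 ≤ e.repr (T v) i

def IsPositivityImproving (T : H →L[ℝ] H) : Prop :=
  ∀ v, (∀ i, 0 ≤ e.repr v i) → v ≠ 0 → ∀ i, 0 < e.repr (T v) i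

variable {e} {T : H →L[ℝ] H}

lemma IsPositivityImproving.isPositivityPreserving (hT : e.IsPositivityImproving T) :
    e.IsPositivityPreserving T := by
  intro v hv i
  rcases eq_or_ne v 0 with rfl | hne
  · simp
  · exact (hT v hv hne i).le

lemma abs_repr_apply_le (hT : e.IsPositivityPreserving T) (w : H) (i : ι) :
    |e.repr (T w) i| ≤ e.repr (T (e.absVec w)) i := by
  have hadd := hT (e.absVec w + w)
    (fun j => by simpa using neg_le_iff_add_nonneg'.1 (neg_abs_le (e.repr w j))) i
  have hsub := hT (e.absVec w - w) (fun j => by simpa using le_abs_self (e.repr w j)) i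
  simp only [map_add, map_sub, lp.coeFn_add, lp.coeFn_sub, Pi.add_apply, Pi.sub_apply] at hadd hsub
  exact abs_le.2 ⟨by linarith, by linarith⟩

lemma inner_apply_le_inner_absVec_apply (hT : e.IsPositivityPreserving T) (v : H) :
    ⟪v, T v⟫_ℝ ≤ ⟪e.absVec v, T (e.absVec v)⟫_ℝ := by
  rw [e.inner_eq_tsum_repr_mul_repr, e.inner_eq_tsum_repr_mul_repr]
  refine (e.summable_repr_mul_repr _ _).tsum_le_tsum (fun i => ?_) (e.summable_repr_mul_repr _ _)
  calc e.repr v i * e.repr (T v) i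
      ≤ |e.repr v i| * |e.repr (T v) i| := by rw [← abs_mul]; exact le_abs_self _
    _ ≤ |e.repr v i| * e.repr (T (e.absVec v)) i := by
        gcongr
        exact abs_repr_apply_le hT v i
    _ = e.repr (e.absVec v) i * e.repr (T (e.absVec v)) i := by rw [repr_absVec]

lemma apply_absVec_eq_norm_smul (hT : e.IsPositivityPreserving T) {ψ : H}
    (hψ : T ψ = ‖T‖ • ψ) : T (e.absVec ψ) = ‖T‖ • e.absVec ψ := by
  refine T.apply_eq_norm_smul_of_le_inner ?_
  calc ‖T‖ * ‖e.absVec ψ‖ ^ 2 = ⟪ψ, T ψ⟫_ℝ := by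
        rw [norm_absVec, hψ, inner_smul_right, real_inner_self_eq_norm_sq]
    _ ≤ ⟪e.absVec ψ, T (e.absVec ψ)⟫_ℝ := inner_apply_le_inner_absVec_apply hT ψ

lemma repr_pos_of_apply_eq_smul (hT : e.IsPositivityImproving T) {χ : H} {c : ℝ}
    (hχ : T χ = c • χ) (hne : χ ≠ 0) (hnonneg : ∀ i, 0 ≤ e.repr χ i) (i : ι) :
    0 < e.repr χ i := by
  have hpos := hT χ hnonneg hne i
  rw [hχ, map_smul, lp.coeFn_smul, Pi.smul_apply, smul_eq_mul] at hpos
  refine (hnonneg i).lt_of_ne fun hzero => ?_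
  rw [← hzero, mul_zero] at hpos
  exact hpos.false

lemma eq_zero_of_repr_eq_zero (hT : e.IsPositivityImproving T) {χ : H}
    (hχ : T χ = ‖T‖ • χ) {i : ι} (hi : e.repr χ i = 0) : χ = 0 := by
  by_contra hne
  have hpos := repr_pos_of_apply_eq_smul hT
    (apply_absVec_eq_norm_smul hT.isPositivityPreserving hχ) (e.absVec_eq_zero_iff.not.2 hne)
    (fun j => by simp) i
  simp [hi] at hpos

lemma exists_eq_smul_of_apply_eq_norm_smul (hT : e.IsPositivityImproving T) {φ ψ : H}
    (hφ : T φ = ‖T‖ • φ) {i : ι} (hφi : e.repr φ i ≠ 0) (hψ : T ψ = ‖T‖ • ψ) :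
    ∃ c : ℝ, ψ = c • φ := by
  set c := e.repr ψ i / e.repr φ i
  refine ⟨c, sub_eq_zero.1 (eq_zero_of_repr_eq_zero hT (i := i) ?_ ?_)⟩
  · rw [map_sub, map_smul, hψ, hφ, smul_sub, smul_comm]
  · simp only [map_sub, map_smul, lp.coeFn_sub, lp.coeFn_smul, Pi.sub_apply, Pi.smul_apply,
      smul_eq_mul, c]
    field_simp
    ring

end HilbertBasis

end

theorem perron_frobenius_faris_general {H : Type*} [NormedAddCommGroup H] [InnerProductSpace ℝ H]
    (e : HilbertBasis ℕ ℝ H) (T : H →L[ℝ] H)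
    (himp : ∀ v : H, (∀ n, 0 ≤ e.repr v n) → v ≠ 0 → ∀ n, 0 < e.repr (T v) n)
    (hev : ∃ φ : H, φ ≠ 0 ∧ T φ = ‖T‖ • φ) :
    ∃ φ₀ : H, φ₀ ≠ 0 ∧ T φ₀ = ‖T‖ • φ₀ ∧ (∀ n, 0 < e.repr φ₀ n) ∧
      ∀ ψ : H, T ψ = ‖T‖ • ψ → ∃ c : ℝ, ψ = c • φ₀ := by
  obtain ⟨φ, hφ, hφT⟩ := hev
  have hT : e.IsPositivityImproving T := himp
  have hφ₀T := HilbertBasis.apply_absVec_eq_norm_smul hT.isPositivityPreserving hφT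
  have hφ₀ : e.absVec φ ≠ 0 := e.absVec_eq_zero_iff.not.2 hφ
  have hpos := HilbertBasis.repr_pos_of_apply_eq_smul hT hφ₀T hφ₀ (fun n => by simp)
  exact ⟨e.absVec φ, hφ₀, hφ₀T, hpos, fun ψ hψ =>
    HilbertBasis.exists_eq_smul_of_apply_eq_norm_smul hT hφ₀T (hpos 0).ne' hψ⟩

/-- Perron–Frobenius–Faris theorem: if `T` is a bounded self-adjoint operator which
improves positivity with respect to the cone of vectors with nonnegative coefficients
in an orthonormal basis, and `‖T‖` is an eigenvalue of `T`, then `‖T‖` is a simple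
eigenvalue with a strictly positive eigenvector. -/
theorem perron_frobenius_faris {H : Type*} [NormedAddCommGroup H] [InnerProductSpace ℝ H]
    [CompleteSpace H] (e : HilbertBasis ℕ ℝ H) (T : H →L[ℝ] H)
    (hsa : IsSelfAdjoint T)
    (himp : ∀ v : H, (∀ n, 0 ≤ e.repr v n) → v ≠ 0 → ∀ n, 0 < e.repr (T v) n)
    (hev : ∃ φ : H, φ ≠ 0 ∧ T φ = ‖T‖ • φ) :
    ∃ φ₀ : H, φ₀ ≠ 0 ∧ T φ₀ = ‖T‖ • φ₀ ∧ (∀ n, 0 < e.repr φ₀ n) ∧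
      ∀ ψ : H, T ψ = ‖T‖ • ψ → ∃ c : ℝ, ψ = c • φ₀ :=
  perron_frobenius_faris_general e T himp hev
end
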